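/- arXiv:1109.5600 — 5 statements merged into one kernel-verified Lean document; each statement's English description precedes it below -/
import Mathlib

section
/- Let a ∈ ℝ and let G : ℝ → ℝ be nondecreasing and right-continuous with G(x) = 0 for all x < a, and suppose G is differentiable at every x > a with derivative G' log-convex on (a,∞). Fix an integer n ≥ 1 and define the sequence u_0 = G(a + 1/n) and u_m = G(a + (m+1)/n) − G(a + m/n) for m ≥ 1 (these are the jumps of the discretized function G_n of Lemma 2.2 at the points a + m/n). Then the sequence (u_m)_{m≥0} is log-convex, i.e. u_{m+1}^2 ≤ u_m · u_{m+2} for all m ≥ 0. -/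
/-!
On each mesh interval the jump of `G` is the integral of `G'` (fundamental theorem of calculus,
with right-continuity at `a` covering the first interval). With `h = 1/n`, log-convexity of `G'`
gives `G' (x + h) ^ 2 ≤ G' x * G' (x + 2 * h)` pointwise (for `h = 1` by halving the step), and
Cauchy–Schwarz on `[s, s + h]` integrates this into the inequality between consecutive jumps.
The first term `u 0 = G (a + h)` only exceeds the jump `G (a + h) - G a`, as `G a ≥ 0`.
-/

open MeasureTheory Set

lemma MeasureTheory.Integrable.memLp_two_sqrt {α : Type*} [MeasurableSpace α] {μ : Measure α}
    {f : α → ℝ} (hf : Integrable f μ) (hf0 : 0 ≤ᵐ[μ] f) : MemLp (fun x ↦ √(f x)) 2 μ := by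
  rw [memLp_two_iff_integrable_sq
    (Real.continuous_sqrt.comp_aestronglyMeasurable hf.aestronglyMeasurable)]
  refine hf.congr ?_
  filter_upwards [hf0] with x hx
  exact (Real.sq_sqrt hx).symm

lemma sq_integral_le_integral_mul_integral_of_sq_le_mul {α : Type*} [MeasurableSpace α]
    {μ : Measure α} {f g p : α → ℝ} (hf : Integrable f μ) (hg : Integrable g μ)
    (hf0 : 0 ≤ᵐ[μ] f) (hg0 : 0 ≤ᵐ[μ] g) (hp : ∀ᵐ x ∂μ, p x ^ 2 ≤ f x * g x) :
    (∫ x, p x ∂μ) ^ 2 ≤ (∫ x, f x ∂μ) * ∫ x, g x ∂μ := by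
  have integral_sqrt_rpow_two : ∀ {k : α → ℝ}, 0 ≤ᵐ[μ] k →
      ∫ x, √(k x) ^ (2 : ℝ) ∂μ = ∫ x, k x ∂μ :=
    fun hk0 ↦ integral_congr_ae (hk0.mono fun x hx ↦ by simp [Real.sq_sqrt hx])
  have hF := hf.memLp_two_sqrt hf0
  have hG := hg.memLp_two_sqrt hg0
  have hpointwise : ∀ᵐ x ∂μ, |p x| ≤ √(f x) * √(g x) := by
    filter_upwards [hf0, hp] with x hx hpx
    rw [← Real.sqrt_mul hx, ← Real.sqrt_sq_eq_abs]
    exact Real.sqrt_le_sqrt hpx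
  have holder := integral_mul_le_Lp_mul_Lq_of_nonneg Real.HolderConjugate.two_two
    (ae_of_all _ fun x ↦ Real.sqrt_nonneg (f x)) (ae_of_all _ fun x ↦ Real.sqrt_nonneg (g x))
    (by simpa using hF) (by simpa using hG)
  rw [integral_sqrt_rpow_two hf0, integral_sqrt_rpow_two hg0, ← Real.sqrt_eq_rpow,
    ← Real.sqrt_eq_rpow] at holder
  calc (∫ x, p x ∂μ) ^ 2 = |∫ x, p x ∂μ| ^ 2 := (sq_abs _).symm
    _ ≤ (∫ x, |p x| ∂μ) ^ 2 := by
        gcongr; simpa only [← Real.norm_eq_abs] using norm_integral_le_integral_norm p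
    _ ≤ (√(∫ x, f x ∂μ) * √(∫ x, g x ∂μ)) ^ 2 := by
        gcongr
        exact (integral_mono_of_nonneg (ae_of_all _ fun x ↦ abs_nonneg _)
          (hF.integrable_mul hG) hpointwise).trans holder
    _ = (∫ x, f x ∂μ) * ∫ x, g x ∂μ := by
        rw [mul_pow, Real.sq_sqrt (integral_nonneg_of_ae hf0),
          Real.sq_sqrt (integral_nonneg_of_ae hg0)]

lemma sq_le_mul_of_sq_le_mul_halves {g₀ q₁ p q₂ g₂ : ℝ} (hg₀ : 0 ≤ g₀) (hp : 0 ≤ p)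
    (hg₂ : 0 ≤ g₂) (h₁ : q₁ ^ 2 ≤ g₀ * p) (h₂ : p ^ 2 ≤ q₁ * q₂) (h₃ : q₂ ^ 2 ≤ p * g₂) :
    p ^ 2 ≤ g₀ * g₂ := by
  rcases hp.eq_or_lt with rfl | hp
  · simpa using mul_nonneg hg₀ hg₂
  refine le_of_mul_le_mul_right ?_ (pow_pos hp 2)
  calc p ^ 2 * p ^ 2 = (p ^ 2) ^ 2 := by ring
    _ ≤ (q₁ * q₂) ^ 2 := pow_le_pow_left₀ (sq_nonneg p) h₂ 2
    _ = q₁ ^ 2 * q₂ ^ 2 := by ring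
    _ ≤ (g₀ * p) * (p * g₂) := mul_le_mul h₁ h₃ (sq_nonneg q₂) (mul_nonneg hg₀ hp.le)
    _ = g₀ * g₂ * p ^ 2 := by ring

lemma sq_le_mul_of_step_lt_two {a : ℝ} {g : ℝ → ℝ} (hg0 : ∀ x, a < x → 0 ≤ g x)
    (hlc : ∀ x, a < x → ∀ y ∈ Ioo (0 : ℝ) 1, g (x + y) ^ 2 ≤ g x * g (x + 2 * y))
    {x h : ℝ} (hx : a < x) (hh : h ∈ Ioo (0 : ℝ) 2) : g (x + h) ^ 2 ≤ g x * g (x + 2 * h) := by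
  have hy : h / 2 ∈ Ioo (0 : ℝ) 1 := ⟨by linarith [hh.1], by linarith [hh.2]⟩
  have h₁ := hlc x hx (h / 2) hy
  have h₂ := hlc (x + h / 2) (by linarith [hh.1]) (h / 2) hy
  have h₃ := hlc (x + h) (by linarith [hh.1]) (h / 2) hy
  rw [show x + 2 * (h / 2) = x + h by ring] at h₁
  rw [show x + h / 2 + h / 2 = x + h by ring, show x + h / 2 + 2 * (h / 2) = x + h + h / 2 by ring]
    at h₂
  rw [show x + h + 2 * (h / 2) = x + 2 * h by ring] at h₃
  exact sq_le_mul_of_sq_le_mul_halves (hg0 x hx) (hg0 _ (by linarith [hh.1]))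
    (hg0 _ (by linarith [hh.1])) h₁ h₂ h₃

lemma sq_integral_shift_le {g : ℝ → ℝ} {s h : ℝ} (hh : 0 ≤ h)
    (hint₀ : IntervalIntegrable g volume s (s + h))
    (hint₂ : IntervalIntegrable g volume (s + 2 * h) (s + 3 * h))
    (hg0 : ∀ x, s < x → 0 ≤ g x) (hlc : ∀ x, s < x → g (x + h) ^ 2 ≤ g x * g (x + 2 * h)) :
    (∫ x in s + h..s + 2 * h, g x) ^ 2 ≤
      (∫ x in s..s + h, g x) * ∫ x in s + 2 * h..s + 3 * h, g x := by
  have shift : ∀ c, ∫ x in s..s + h, g (x + c) = ∫ x in s + c..s + c + h, g x := fun c ↦ by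
    rw [intervalIntegral.integral_comp_add_right, add_right_comm]
  have hint₂' : IntervalIntegrable (fun x ↦ g (x + 2 * h)) volume s (s + h) := by
    simpa [show s + 3 * h - 2 * h = s + h by ring] using hint₂.comp_add_right (2 * h)
  rw [show s + 2 * h = s + h + h by ring, ← shift, show s + h + h = s + 2 * h by ring,
    show s + 3 * h = s + 2 * h + h by ring, ← shift]
  simp only [intervalIntegral.integral_of_le (show s ≤ s + h by linarith)]
  have hmem : ∀ᵐ x ∂volume.restrict (Ioc s (s + h)), s < x :=
    (ae_restrict_mem measurableSet_Ioc).mono fun x hx ↦ hx.1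
  refine sq_integral_le_integral_mul_integral_of_sq_le_mul
    ((intervalIntegrable_iff_integrableOn_Ioc_of_le (by linarith)).1 hint₀)
    ((intervalIntegrable_iff_integrableOn_Ioc_of_le (by linarith)).1 hint₂')
    (hmem.mono fun x hx ↦ hg0 x hx) (hmem.mono fun x hx ↦ hg0 _ (by linarith))
    (hmem.mono fun x hx ↦ hlc x hx)

section Jumps

variable {a : ℝ} {G G' : ℝ → ℝ}

lemma continuousOn_Icc_of_hasDerivAt_Ioi (hrc : ContinuousWithinAt G (Ici a) a)
    (hderiv : ∀ x, a < x → HasDerivAt G (G' x) x) {s t : ℝ} (hs : a ≤ s) :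
    ContinuousOn G (Icc s t) := by
  intro x hx
  rcases (hs.trans hx.1).eq_or_lt with rfl | hax
  · exact hrc.mono fun y hy ↦ hs.trans hy.1
  · exact (hderiv x hax).continuousAt.continuousWithinAt

lemma intervalIntegrable_of_hasDerivAt_Ioi (hrc : ContinuousWithinAt G (Ici a) a)
    (hderiv : ∀ x, a < x → HasDerivAt G (G' x) x) (hG'0 : ∀ x, a < x → 0 ≤ G' x)
    {s t : ℝ} (hs : a ≤ s) (hst : s ≤ t) : IntervalIntegrable G' volume s t :=
  (intervalIntegrable_iff_integrableOn_Ioc_of_le hst).2 <|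
    intervalIntegral.integrableOn_deriv_of_nonneg (continuousOn_Icc_of_hasDerivAt_Ioi hrc hderiv hs)
      (fun x hx ↦ hderiv x (hs.trans_lt hx.1)) (fun x hx ↦ hG'0 x (hs.trans_lt hx.1))

lemma integral_eq_sub_of_hasDerivAt_Ioi (hrc : ContinuousWithinAt G (Ici a) a)
    (hderiv : ∀ x, a < x → HasDerivAt G (G' x) x) (hG'0 : ∀ x, a < x → 0 ≤ G' x)
    {s t : ℝ} (hs : a ≤ s) (hst : s ≤ t) : ∫ x in s..t, G' x = G t - G s :=
  intervalIntegral.integral_eq_sub_of_hasDerivAt_of_le hst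
    (continuousOn_Icc_of_hasDerivAt_Ioi hrc hderiv hs) (fun x hx ↦ hderiv x (hs.trans_lt hx.1))
    (intervalIntegrable_of_hasDerivAt_Ioi hrc hderiv hG'0 hs hst)

lemma sq_sub_le_mul_sub_of_hasDerivAt_Ioi (hrc : ContinuousWithinAt G (Ici a) a)
    (hderiv : ∀ x, a < x → HasDerivAt G (G' x) x) (hG'0 : ∀ x, a < x → 0 ≤ G' x)
    {h : ℝ} (hh : 0 ≤ h) (hlc : ∀ x, a < x → G' (x + h) ^ 2 ≤ G' x * G' (x + 2 * h))
    {s : ℝ} (hs : a ≤ s) :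
    (G (s + 2 * h) - G (s + h)) ^ 2 ≤ (G (s + h) - G s) * (G (s + 3 * h) - G (s + 2 * h)) := by
  have hFTC : ∀ {t₁ t₂}, a ≤ t₁ → t₁ ≤ t₂ → ∫ x in t₁..t₂, G' x = G t₂ - G t₁ :=
    integral_eq_sub_of_hasDerivAt_Ioi hrc hderiv hG'0
  rw [← hFTC hs (by linarith), ← hFTC (by linarith) (by linarith),
    ← hFTC (by linarith) (by linarith)]
  exact sq_integral_shift_le hh
    (intervalIntegrable_of_hasDerivAt_Ioi hrc hderiv hG'0 hs (by linarith))
    (intervalIntegrable_of_hasDerivAt_Ioi hrc hderiv hG'0 (by linarith) (by linarith))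
    (fun x hx ↦ hG'0 x (hs.trans_lt hx)) (fun x hx ↦ hlc x (hs.trans_lt hx))

end Jumps

/-- log-convexity of the jumps in Lemma 2.2: with `G` nondecreasing,
right-continuous, vanishing on `(-∞, a)` and differentiable on `(a,∞)` with log-convex
derivative, and `n ≥ 1` fixed, the sequence of jumps `u 0 = G (a + 1/n)`,
`u m = G (a + (m+1)/n) - G (a + m/n)` for `m ≥ 1`, is log-convex. -/
theorem jumps_logConvex (a : ℝ) (G G' : ℝ → ℝ)
    (hmono : Monotone G)
    (hrc : ∀ x : ℝ, ContinuousWithinAt G (Ici x) x)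
    (hG0 : ∀ x, x < a → G x = 0)
    (hderiv : ∀ x, a < x → HasDerivAt G (G' x) x)
    (hlc : ∀ x, a < x → ∀ y ∈ Ioo (0 : ℝ) 1,
      (G' (x + y)) ^ 2 ≤ G' x * G' (x + 2 * y))
    (n : ℕ) (hn : 1 ≤ n) (u : ℕ → ℝ)
    (hu0 : u 0 = G (a + 1 / n))
    (hum : ∀ m : ℕ, 1 ≤ m → u m = G (a + ((m : ℝ) + 1) / n) - G (a + (m : ℝ) / n)) :
    ∀ m : ℕ, (u (m + 1)) ^ 2 ≤ u m * u (m + 2) := by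
  set h : ℝ := 1 / n
  have hh : h ∈ Ioo (0 : ℝ) 2 :=
    ⟨by positivity, by rw [div_lt_iff₀ (by positivity)]; norm_cast; omega⟩
  have hG'0 : ∀ x, a < x → 0 ≤ G' x := fun x hx ↦ (hderiv x hx).deriv ▸ hmono.deriv_nonneg
  set d : ℕ → ℝ := fun m ↦ G (a + (m + 1) * h) - G (a + m * h)
  have hd : ∀ m, d (m + 1) ^ 2 ≤ d m * d (m + 2) := fun m ↦ by
    convert sq_sub_le_mul_sub_of_hasDerivAt_Ioi (hrc a) hderiv hG'0 hh.1.le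
      (fun x hx ↦ sq_le_mul_of_step_lt_two hG'0 hlc hx hh)
      (le_add_of_nonneg_right (by positivity : 0 ≤ (m : ℝ) * h)) using 3 <;>
      push_cast <;> ring_nf
  have hd0 : d 0 ≤ u 0 := by
    have hGa : 0 ≤ G a := hG0 (a - 1) (by linarith) ▸ hmono (by linarith)
    simp only [d, hu0]
    norm_num [hGa]
  have hu : ∀ m, 1 ≤ m → u m = d m := fun m hm ↦ by
    rw [hum m hm]; simp only [d, h]; ring_nf
  rintro (_ | m)
  · rw [hu 1 le_rfl, hu 2 (by norm_num)]
    exact (hd 0).trans (mul_le_mul_of_nonneg_right hd0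
      (sub_nonneg.2 (hmono (by push_cast; linarith [hh.1]))))
  · rw [hu (m + 1) (by omega), hu (m + 1 + 1) (by omega), hu (m + 1 + 2) (by omega)]
    exact hd (m + 1)
end

section
/- Let g : ℕ → [0,∞) be a log-convex sequence and let (ν_n)_{n≥0} be a sequence of nonnegative real numbers such that h(m) := Σ_{n=0}^∞ g(m+n) · ν_n is finite for every m ≥ 0. Then the sequence (h(m))_{m≥0} is log-convex. -/
/-- Remark 2.2(i): if `g : ℕ → [0,∞)` is log-convex and `ν n ≥ 0`, then
`h m := ∑' n, g (m + n) * ν n`, assumed finite (summable) for every `m`, is log-convex. -/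
theorem tsum_logConvexSeq (g : ℕ → ℝ) (ν : ℕ → ℝ)
    (hg_nonneg : ∀ n, 0 ≤ g n)
    (hg_lc : ∀ n : ℕ, (g (n + 1)) ^ 2 ≤ g n * g (n + 2))
    (hν : ∀ n, 0 ≤ ν n)
    (hsum : ∀ m : ℕ, Summable (fun n : ℕ => g (m + n) * ν n)) :
    ∀ m : ℕ, (∑' n : ℕ, g (m + 1 + n) * ν n) ^ 2 ≤
      (∑' n : ℕ, g (m + n) * ν n) * ∑' n : ℕ, g (m + 2 + n) * ν n := by
  intro m
  set A := ∑' n : ℕ, g (m + n) * ν n with hA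
  set C := ∑' n : ℕ, g (m + 2 + n) * ν n with hC
  have hA0 : 0 ≤ A := tsum_nonneg fun n => mul_nonneg (hg_nonneg _) (hν n)
  have hC0 : 0 ≤ C := tsum_nonneg fun n => mul_nonneg (hg_nonneg _) (hν n)
  have hB : ∑' n : ℕ, g (m + 1 + n) * ν n ≤ Real.sqrt A * Real.sqrt C := by
    apply Summable.tsum_le_of_sum_le (hsum (m + 1))
    intro s
    calc ∑ n ∈ s, g (m + 1 + n) * ν n
        ≤ ∑ n ∈ s, Real.sqrt (g (m + n) * ν n) * Real.sqrt (g (m + 2 + n) * ν n) := by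
          apply Finset.sum_le_sum
          intro n _
          rw [← Real.sqrt_mul (mul_nonneg (hg_nonneg _) (hν n))]
          apply Real.le_sqrt_of_sq_le
          have h1 : g (m + 1 + n) ^ 2 ≤ g (m + n) * g (m + 2 + n) := by
            have := hg_lc (m + n)
            have e1 : m + 1 + n = m + n + 1 := by omega
            have e2 : m + 2 + n = m + n + 2 := by omega
            rw [e1, e2]; exact this
          calc (g (m + 1 + n) * ν n) ^ 2 = g (m + 1 + n) ^ 2 * (ν n * ν n) := by ring
            _ ≤ g (m + n) * g (m + 2 + n) * (ν n * ν n) := by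
                apply mul_le_mul_of_nonneg_right h1 (mul_nonneg (hν n) (hν n))
            _ = g (m + n) * ν n * (g (m + 2 + n) * ν n) := by ring
      _ ≤ Real.sqrt (∑ n ∈ s, g (m + n) * ν n) * Real.sqrt (∑ n ∈ s, g (m + 2 + n) * ν n) :=
          Real.sum_sqrt_mul_sqrt_le s (fun n => mul_nonneg (hg_nonneg _) (hν n))
            (fun n => mul_nonneg (hg_nonneg _) (hν n))
      _ ≤ Real.sqrt A * Real.sqrt C := by
          apply mul_le_mul
          · exact Real.sqrt_le_sqrt (Summable.sum_le_tsum s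
              (fun n _ => mul_nonneg (hg_nonneg _) (hν n)) (hsum m))
          · exact Real.sqrt_le_sqrt (Summable.sum_le_tsum s
              (fun n _ => mul_nonneg (hg_nonneg _) (hν n)) (hsum (m + 2)))
          · positivity
          · positivity
  have hB0 : 0 ≤ ∑' n : ℕ, g (m + 1 + n) * ν n :=
    tsum_nonneg fun n => mul_nonneg (hg_nonneg _) (hν n)
  calc (∑' n : ℕ, g (m + 1 + n) * ν n) ^ 2 ≤ (Real.sqrt A * Real.sqrt C) ^ 2 := by
        exact pow_le_pow_left₀ hB0 hB 2
    _ = A * C := by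
        rw [mul_pow, Real.sq_sqrt hA0, Real.sq_sqrt hC0]
end

section
/- Let g : (0,∞) → [0,∞) be a continuous log-convex function and let ν be a Borel measure on (0,∞). Suppose h(x) := ∫_{(0,∞)} g(x·y) dν(y) is finite for every x > 0. Then h is continuous and log-convex on (0,∞). -/
/-!
Doubling the step shows that the local log-convexity hypothesis holds for every step, i.e.
`g (x + d) ^ 2 ≤ g x * g (x + 2 * d)` for all `x, d > 0`. Together with continuity this makes `g`
quasiconvex, so for `x` near `x₀` the integrand `g (x * y)` is dominated by
`g (x₀ / 2 * y) + g (2 * x₀ * y)`, and dominated convergence gives continuity. Log-convexity of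
the integral is Cauchy–Schwarz: `g ((x + y) * z) ^ 2 ≤ g (x * z) * g ((x + 2 * y) * z)` pointwise,
and the quadratic `t ↦ ∫ (t ^ 2 f₀ - 2 t f₁ + f₂)` is nonnegative, so its discriminant is not positive.
-/

open MeasureTheory Set

/-- The log-convexity on `(a, ∞)` of the statement is `IsLogConvexBelow g a 1`. -/
def IsLogConvexBelow (g : ℝ → ℝ) (a r : ℝ) : Prop :=
  ∀ x : ℝ, a < x → ∀ y ∈ Ioo (0 : ℝ) r, g (x + y) ^ 2 ≤ g x * g (x + 2 * y)

namespace IsLogConvexBelow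

variable {g : ℝ → ℝ} {a r : ℝ}

/-- Three overlapping steps of size `d / 2` give `g (x + d) ^ 4 ≤ g x * g (x + d) ^ 2 * g (x + 2 * d)`;
cancel `g (x + d) ^ 2` when it is nonzero. -/
theorem two_mul (hg : ∀ x, a < x → 0 ≤ g x) (h : IsLogConvexBelow g a r) :
    IsLogConvexBelow g a (2 * r) := by
  intro x hx d ⟨hd, hdr⟩
  have he : d / 2 ∈ Ioo 0 r := ⟨by linarith, by linarith⟩
  have h₁ := h x hx _ he
  have h₂ := h (x + d / 2) (by linarith) _ he
  have h₃ := h (x + d) (by linarith) _ he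
  rw [show x + 2 * (d / 2) = x + d by ring] at h₁
  rw [show x + d / 2 + d / 2 = x + d by ring,
    show x + d / 2 + 2 * (d / 2) = x + d + d / 2 by ring] at h₂
  rw [show x + d + 2 * (d / 2) = x + 2 * d by ring] at h₃
  rcases (hg (x + d) (by linarith)).eq_or_lt with hC | hC
  · rw [← hC, sq, zero_mul]
    exact mul_nonneg (hg x hx) (hg _ (by linarith))
  have hfour : (g (x + d) ^ 2) ^ 2 ≤ (g x * g (x + 2 * d)) * g (x + d) ^ 2 :=
    calc (g (x + d) ^ 2) ^ 2 ≤ (g (x + d / 2) * g (x + d + d / 2)) ^ 2 :=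
          pow_le_pow_left₀ (sq_nonneg _) h₂ 2
      _ = g (x + d / 2) ^ 2 * g (x + d + d / 2) ^ 2 := mul_pow _ _ _
      _ ≤ (g x * g (x + d)) * (g (x + d) * g (x + 2 * d)) :=
          mul_le_mul h₁ h₃ (sq_nonneg _) (mul_nonneg (hg x hx) hC.le)
      _ = (g x * g (x + 2 * d)) * g (x + d) ^ 2 := by ring
  rw [sq (g (x + d) ^ 2)] at hfour
  exact le_of_mul_le_mul_right hfour (by positivity)

theorem pow_two_mul (hg : ∀ x, a < x → 0 ≤ g x) (h : IsLogConvexBelow g a r) (n : ℕ) :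
    IsLogConvexBelow g a (2 ^ n * r) := by
  induction n with
  | zero => simpa using h
  | succ n ih => simpa [pow_succ, mul_comm, mul_left_comm, mul_assoc] using ih.two_mul hg

theorem sq_le_mul (hg : ∀ x, a < x → 0 ≤ g x) (h : IsLogConvexBelow g a r) (hr : 0 < r)
    {x d : ℝ} (hx : a < x) (hd : 0 < d) : g (x + d) ^ 2 ≤ g x * g (x + 2 * d) := by
  obtain ⟨n, hn⟩ := pow_unbounded_of_one_lt (d / r) one_lt_two
  exact h.pow_two_mul hg n x hx d ⟨hd, (div_lt_iff₀ hr).mp hn⟩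

/-- A maximiser `c` of `g` on `[u, v]` satisfies `g c ^ 2 ≤ g (c - d) * g (c + d) ≤ g (c ∓ d) * g c`,
so with `d` the distance to the nearer endpoint, `g c` is bounded by the value there. -/
theorem le_max_of_mem_Icc (hcont : ContinuousOn g (Ioi a)) (hg : ∀ x, a < x → 0 ≤ g x)
    (h : IsLogConvexBelow g a r) (hr : 0 < r) {u v t : ℝ} (hu : a < u) (ht : t ∈ Icc u v) :
    g t ≤ max (g u) (g v) := by
  obtain ⟨c, hc, hmax⟩ := isCompact_Icc.exists_isMaxOn (nonempty_Icc.2 (ht.1.trans ht.2))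
    (hcont.mono fun s hs => hu.trans_le hs.1)
  have hle_sides : ∀ d, 0 < d → c - d ∈ Icc u v → c + d ∈ Icc u v →
      g c ≤ g (c - d) ∧ g c ≤ g (c + d) := by
    intro d hd hl hr'
    have hsq := h.sq_le_mul hg hr (x := c - d) (by linarith [hl.1]) hd
    rw [sub_add_cancel, show c - d + 2 * d = c + d by ring] at hsq
    have hl₀ := hg (c - d) (by linarith [hl.1])
    have hr₀ := hg (c + d) (by linarith [hr'.1])
    have hl' : g (c - d) ≤ g c := hmax hl
    have hr'' : g (c + d) ≤ g c := hmax hr'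
    constructor <;> nlinarith
  refine (hmax ht).trans ?_
  rcases le_total (c - u) (v - c) with hcuv | hcuv
  · rcases hc.1.eq_or_lt with rfl | hcu
    · exact le_max_left _ _
    have := (hle_sides (c - u) (by linarith) ⟨by linarith, by linarith⟩
      ⟨by linarith, by linarith⟩).1
    rw [sub_sub_cancel] at this
    exact this.trans (le_max_left _ _)
  · rcases hc.2.eq_or_lt with rfl | hcv
    · exact le_max_right _ _
    have := (hle_sides (v - c) (by linarith) ⟨by linarith, by linarith⟩
      ⟨by linarith, by linarith⟩).2
    rw [add_sub_cancel] at this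
    exact this.trans (le_max_right _ _)

theorem quasiconvexOn (hcont : ContinuousOn g (Ioi a)) (hg : ∀ x, a < x → 0 ≤ g x)
    (h : IsLogConvexBelow g a r) (hr : 0 < r) : QuasiconvexOn ℝ (Ioi a) g := fun _ =>
  Set.OrdConnected.convex ⟨fun _ hu _ hv _ ht =>
    ⟨hu.1.trans_le ht.1, (h.le_max_of_mem_Icc hcont hg hr hu.1 ht).trans (max_le hu.2 hv.2)⟩⟩

end IsLogConvexBelow

theorem continuousOn_integral_comp_mul {g : ℝ → ℝ} {ν : Measure ℝ}
    (hcont : ContinuousOn g (Ioi 0)) (hqc : QuasiconvexOn ℝ (Ioi 0) g)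
    (hg : ∀ x, 0 < x → 0 ≤ g x)
    (hint : ∀ x, 0 < x → IntegrableOn (fun y => g (x * y)) (Ioi 0) ν) :
    ContinuousOn (fun x => ∫ y in Ioi 0, g (x * y) ∂ν) (Ioi 0) := by
  intro x₀ (hx₀ : 0 < x₀)
  refine ContinuousAt.continuousWithinAt <|
    continuousAt_of_dominated (bound := fun y => g (x₀ / 2 * y) + g (2 * x₀ * y)) ?_ ?_
      ((hint _ (by linarith)).add (hint _ (by linarith))) ?_
  · filter_upwards [Ioi_mem_nhds hx₀] with x hx
    exact (hint x hx).aestronglyMeasurable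
  · filter_upwards [Ioo_mem_nhds (by linarith : x₀ / 2 < x₀) (by linarith : x₀ < 2 * x₀)]
      with x hx
    filter_upwards [ae_restrict_mem measurableSet_Ioi] with y (hy : 0 < y)
    have hlo : 0 < x₀ / 2 * y := by positivity
    have hhi : 0 < 2 * x₀ * y := by positivity
    have hxy : g (x * y) ≤ max (g (x₀ / 2 * y)) (g (2 * x₀ * y)) :=
      ((hqc _).ordConnected.out ⟨hlo, le_max_left _ _⟩ ⟨hhi, le_max_right _ _⟩
        ⟨by nlinarith [hx.1], by nlinarith [hx.2]⟩).2
    rw [Real.norm_of_nonneg (hg _ (by nlinarith [hx.1]))]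
    exact hxy.trans (max_le_add_of_nonneg (hg _ hlo) (hg _ hhi))
  · filter_upwards [ae_restrict_mem measurableSet_Ioi] with y (hy : 0 < y)
    exact (hcont.continuousAt (Ioi_mem_nhds (by positivity))).comp
      (continuousAt_id.mul continuousAt_const)

theorem quadratic_nonneg_of_sq_le_mul {a b c : ℝ} (ha : 0 ≤ a) (hc : 0 ≤ c) (h : b ^ 2 ≤ a * c)
    (t : ℝ) : 0 ≤ a * (t * t) + (-2 * b) * t + c := by
  rcases ha.eq_or_lt with rfl | ha
  · nlinarith
  · nlinarith [sq_nonneg (t * a - b)]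

theorem sq_integral_le_integral_mul_integral {α : Type*} [MeasurableSpace α] {μ : Measure α}
    {f₀ f₁ f₂ : α → ℝ} (h₀ : Integrable f₀ μ) (h₁ : Integrable f₁ μ) (h₂ : Integrable f₂ μ)
    (hf₀ : 0 ≤ᵐ[μ] f₀) (hf₂ : 0 ≤ᵐ[μ] f₂) (h : ∀ᵐ x ∂μ, f₁ x ^ 2 ≤ f₀ x * f₂ x) :
    (∫ x, f₁ x ∂μ) ^ 2 ≤ (∫ x, f₀ x ∂μ) * ∫ x, f₂ x ∂μ := by
  have hquad : ∀ t : ℝ,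
      0 ≤ (∫ x, f₀ x ∂μ) * (t * t) + (-2 * ∫ x, f₁ x ∂μ) * t + ∫ x, f₂ x ∂μ := by
    intro t
    calc 0 ≤ ∫ x, (f₀ x * (t * t) + (-2 * f₁ x) * t + f₂ x) ∂μ := by
          refine integral_nonneg_of_ae ?_
          filter_upwards [hf₀, hf₂, h] with x hx₀ hx₂ hx
          exact quadratic_nonneg_of_sq_le_mul hx₀ hx₂ hx t
      _ = _ := by
          rw [integral_add (by fun_prop) h₂, integral_add (by fun_prop) (by fun_prop),
            integral_mul_const, integral_mul_const, integral_const_mul]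
  have := discrim_le_zero hquad
  rw [discrim] at this
  linarith

/-- Remark 2.2(ii), multiplicative form, `a = 0`: if `g` is continuous and
log-convex on `(0,∞)` and `ν` is a Borel measure on `(0,∞)`, then
`h x := ∫_{(0,∞)} g (x * y) dν(y)`, assumed finite (integrable) for every `x > 0`, is
continuous and log-convex on `(0,∞)`. -/
theorem integral_scale_logConvex (g : ℝ → ℝ) (ν : Measure ℝ)
    (hg_cont : ContinuousOn g (Ioi 0))
    (hg_nonneg : ∀ x : ℝ, 0 < x → 0 ≤ g x)
    (hg_lc : ∀ x : ℝ, 0 < x → ∀ y ∈ Ioo (0 : ℝ) 1,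
      (g (x + y)) ^ 2 ≤ g x * g (x + 2 * y))
    (hint : ∀ x : ℝ, 0 < x → IntegrableOn (fun y : ℝ => g (x * y)) (Ioi 0) ν) :
    ContinuousOn (fun x : ℝ => ∫ y in Ioi (0 : ℝ), g (x * y) ∂ν) (Ioi 0) ∧
      ∀ x : ℝ, 0 < x → ∀ y ∈ Ioo (0 : ℝ) 1,
        (∫ z in Ioi (0 : ℝ), g ((x + y) * z) ∂ν) ^ 2 ≤
          (∫ z in Ioi (0 : ℝ), g (x * z) ∂ν) * ∫ z in Ioi (0 : ℝ), g ((x + 2 * y) * z) ∂ν := by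
  have hlc : IsLogConvexBelow g 0 1 := hg_lc
  refine ⟨continuousOn_integral_comp_mul hg_cont (hlc.quasiconvexOn hg_cont hg_nonneg one_pos)
    hg_nonneg hint, fun x hx y hy => ?_⟩
  have hxy : 0 < x + y := by linarith [hy.1]
  have hx2y : 0 < x + 2 * y := by linarith [hy.1]
  refine sq_integral_le_integral_mul_integral (hint x hx) (hint _ hxy) (hint _ hx2y) ?_ ?_ ?_ <;>
    filter_upwards [ae_restrict_mem measurableSet_Ioi] with z (hz : 0 < z)
  · exact hg_nonneg _ (mul_pos hx hz)
  · exact hg_nonneg _ (mul_pos hx2y hz)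
  · convert hlc.sq_le_mul hg_nonneg one_pos (mul_pos hx hz) (mul_pos hy.1 hz) using 3 <;> ring
end

section
/- Let a ≥ 0 and let G : ℝ → ℝ be nondecreasing and right-continuous with G(x) = 0 for all x < a, and suppose G is differentiable at every x > a with derivative G' log-convex on (a,∞). Let V be a nonnegative real random variable on a probability space, with P(V ≥ 1) = 1 in case a > 0, and assume E(G(xV)) < ∞ for every x ≥ a. Define H(x) = E(G(xV)) for x ≥ a and H(x) = 0 for x < a. Then H is differentiable at every x > a with H'(x) = E(V · G'(xV) · 1_{V>0}), and H' is continuous and log-convex on (a,∞). -/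
/-!
Since `G' ≥ 0`, log-convexity of `G'` implies midpoint convexity, and for a midpoint convex
derivative the auxiliary function `y ↦ G (τ + y) - G (τ - y) - 2 y G' τ` is nondecreasing, so
`G' τ ≤ (G (τ + η) - G (τ - η)) / (2 η)`. With `τ = xV`, `η = εV` this dominates
`V G'(xV)` uniformly for `x` near `x₀` by an integrable difference of values of `G`, and
differentiation under the integral gives `H'`. Log-convexity of `G'` holds pointwise for the
integrand and passes to `H'` by Cauchy–Schwarz. Finally `H'` is itself a nonnegative,
midpoint log-convex derivative of a nondecreasing function, so the same difference-quotient
bound makes it locally bounded; a locally bounded midpoint convex function is continuous.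
-/

open MeasureTheory Set Filter

/-- With `c = x + y` this is the paper's `g(x+y)^2 ≤ g(x) g(x+2y)`: midpoint convexity of
`log g`, stated without dividing by or taking logarithms of `g`. -/
def MidpointLogConvexOn (s : Set ℝ) (g : ℝ → ℝ) : Prop :=
  ∀ c y, c - y ∈ s → c + y ∈ s → g c ^ 2 ≤ g (c - y) * g (c + y)

def MidpointConvexOn (s : Set ℝ) (g : ℝ → ℝ) : Prop :=
  ∀ c y, c - y ∈ s → c + y ∈ s → 2 * g c ≤ g (c - y) + g (c + y)

theorem Set.OrdConnected.add_mem_of_abs_le {s : Set ℝ} [hs : s.OrdConnected] {c y t : ℝ}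
    (h₁ : c - y ∈ s) (h₂ : c + y ∈ s) (ht : |t| ≤ |y|) : c + t ∈ s := by
  apply hs.uIcc_subset h₁ h₂
  rw [mem_uIcc]
  obtain ⟨ht₁, ht₂⟩ := abs_le.mp ht
  rcases le_total 0 y with hy | hy
  · rw [abs_of_nonneg hy] at ht₁ ht₂
    exact Or.inl ⟨by linarith, by linarith⟩
  · rw [abs_of_nonpos hy] at ht₁ ht₂
    exact Or.inr ⟨by linarith, by linarith⟩

namespace MidpointLogConvexOn

variable {s : Set ℝ} {g : ℝ → ℝ}

/-- Step `y` follows from step `y / 2` applied around `c - y / 2`, `c` and `c + y / 2`, so the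
inequality for steps in `(0, 1)` propagates to all steps. -/
theorem of_mem_Ioo_zero_one [s.OrdConnected] (hnn : ∀ x ∈ s, 0 ≤ g x)
    (h : ∀ c y, c - y ∈ s → c + y ∈ s → y ∈ Ioo 0 1 → g c ^ 2 ≤ g (c - y) * g (c + y)) :
    MidpointLogConvexOn s g := by
  have of_abs_lt_two_pow : ∀ n : ℕ, ∀ c y, c - y ∈ s → c + y ∈ s → |y| < 2 ^ n →
      g c ^ 2 ≤ g (c - y) * g (c + y) := by
    intro n
    induction n with
    | zero =>
      intro c y h₁ h₂ hy
      rw [pow_zero] at hy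
      rcases lt_trichotomy y 0 with hneg | rfl | hpos
      · rw [abs_of_neg hneg] at hy
        have := h c (-y) (by rwa [sub_neg_eq_add]) (by rwa [← sub_eq_add_neg])
          ⟨by linarith, by linarith⟩
        rwa [sub_neg_eq_add, ← sub_eq_add_neg, mul_comm] at this
      · simp [sq]
      · exact h c y h₁ h₂ ⟨hpos, by rwa [abs_of_pos hpos] at hy⟩
    | succ n ih =>
      intro c y h₁ h₂ hy
      have hy' : |y / 2| < 2 ^ n := by
        rw [abs_div, abs_two]; rw [pow_succ] at hy; linarith
      have hle : |y / 2| ≤ |y| := by rw [abs_div, abs_two]; linarith [abs_nonneg y]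
      have hc : c ∈ s := by
        simpa using Set.OrdConnected.add_mem_of_abs_le h₁ h₂ (t := 0) (by simp)
      have hl : c - y / 2 ∈ s := by
        simpa [← sub_eq_add_neg] using
          Set.OrdConnected.add_mem_of_abs_le h₁ h₂ (t := -(y / 2)) (by rwa [abs_neg])
      have hr : c + y / 2 ∈ s := Set.OrdConnected.add_mem_of_abs_le h₁ h₂ hle
      have hmid := ih c (y / 2) hl hr hy'
      have hleft := ih (c - y / 2) (y / 2) (by convert h₁ using 1; ring) (by simpa using hc) hy'
      have hright := ih (c + y / 2) (y / 2) (by simpa using hc) (by convert h₂ using 1; ring) hy'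
      rw [sub_sub, add_halves, sub_add_cancel] at hleft
      rw [add_sub_cancel_right, add_assoc, add_halves] at hright
      rcases (hnn c hc).eq_or_lt with h0 | hpos
      · rw [← h0, sq, zero_mul]
        exact mul_nonneg (hnn _ h₁) (hnn _ h₂)
      · refine le_of_mul_le_mul_left ?_ (pow_pos hpos 2)
        calc g c ^ 2 * g c ^ 2 ≤ (g (c - y / 2) * g (c + y / 2)) ^ 2 := by
              rw [← sq]; exact pow_le_pow_left₀ (sq_nonneg _) hmid 2
          _ = g (c - y / 2) ^ 2 * g (c + y / 2) ^ 2 := mul_pow _ _ 2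
          _ ≤ (g (c - y) * g c) * (g c * g (c + y)) :=
              mul_le_mul hleft hright (sq_nonneg _) (mul_nonneg (hnn _ h₁) hpos.le)
          _ = g c ^ 2 * (g (c - y) * g (c + y)) := by ring
  intro c y h₁ h₂
  obtain ⟨n, hn⟩ := pow_unbounded_of_one_lt |y| (one_lt_two : (1 : ℝ) < 2)
  exact of_abs_lt_two_pow n c y h₁ h₂ hn

theorem midpointConvexOn (hg : MidpointLogConvexOn s g) (hnn : ∀ x ∈ s, 0 ≤ g x) :
    MidpointConvexOn s g := by
  intro c y h₁ h₂
  have := hg c y h₁ h₂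
  nlinarith [sq_nonneg (g (c - y) - g (c + y)), hnn _ h₁, hnn _ h₂]

end MidpointLogConvexOn

namespace MidpointConvexOn

variable {s : Set ℝ} {g : ℝ → ℝ}

theorem sub_le_div_pow (hg : MidpointConvexOn s g) {t δ M : ℝ}
    (hsub : Icc (t - δ) (t + δ) ⊆ s) (hM : ∀ x ∈ Icc (t - δ) (t + δ), g x ≤ M) (n : ℕ) :
    ∀ h, 2 ^ n * |h| ≤ δ → g (t + h) - g t ≤ (M - g t) / 2 ^ n := by
  induction n with
  | zero =>
    intro h hh
    rw [pow_zero, one_mul] at hh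
    obtain ⟨h₁, h₂⟩ := abs_le.mp hh
    rw [pow_zero, div_one]
    linarith [hM (t + h) ⟨by linarith, by linarith⟩]
  | succ n ih =>
    intro h hh
    have h2h : 2 ^ n * |2 * h| ≤ δ := by rw [abs_mul, abs_two]; rw [pow_succ] at hh; linarith
    have hδ : |2 * h| ≤ δ :=
      (le_mul_of_one_le_left (abs_nonneg _) (one_le_pow₀ one_le_two)).trans h2h
    obtain ⟨h₁, h₂⟩ := abs_le.mp hδ
    have hδ₀ := (abs_nonneg (2 * h)).trans hδ
    have hmid := hg (t + h) h (by rw [add_sub_cancel_right]; exact hsub ⟨by linarith, by linarith⟩)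
      (hsub ⟨by linarith, by linarith⟩)
    rw [add_sub_cancel_right, add_assoc, ← two_mul] at hmid
    have := ih (2 * h) h2h
    rw [pow_succ, ← div_div]
    linarith

theorem continuousAt (hg : MidpointConvexOn s g) {t δ M : ℝ} (hδ : 0 < δ)
    (hsub : Icc (t - δ) (t + δ) ⊆ s) (hM : ∀ x ∈ Icc (t - δ) (t + δ), g x ≤ M) :
    ContinuousAt g t := by
  have bound : ∀ (n : ℕ) (h : ℝ), 2 ^ n * |h| ≤ δ → |g (t + h) - g t| ≤ (M - g t) / 2 ^ n := by
    intro n h hh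
    have hh' : 2 ^ n * |-h| ≤ δ := by rwa [abs_neg]
    have hδ' : |h| ≤ δ := (le_mul_of_one_le_left (abs_nonneg _) (one_le_pow₀ one_le_two)).trans hh
    obtain ⟨h₁, h₂⟩ := abs_le.mp hδ'
    have hmid := hg t h (hsub ⟨by linarith, by linarith⟩) (hsub ⟨by linarith, by linarith⟩)
    have := hg.sub_le_div_pow hsub hM n (-h) hh'
    rw [← sub_eq_add_neg] at this
    exact abs_le.mpr ⟨by linarith, hg.sub_le_div_pow hsub hM n h hh⟩
  rw [Metric.continuousAt_iff]
  intro ε hε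
  obtain ⟨n, hn⟩ := pow_unbounded_of_one_lt ((M - g t) / ε) (one_lt_two : (1 : ℝ) < 2)
  refine ⟨δ / 2 ^ n, by positivity, fun {x} hx => ?_⟩
  rw [Real.dist_eq] at hx ⊢
  have hx' : 2 ^ n * |x - t| ≤ δ := by
    rw [lt_div_iff₀ (by positivity)] at hx; linarith
  calc |g x - g t| = |g (t + (x - t)) - g t| := by rw [add_sub_cancel]
    _ ≤ (M - g t) / 2 ^ n := bound n _ hx'
    _ < ε := by rw [div_lt_iff₀ (by positivity)]; rwa [div_lt_iff₀ hε, mul_comm] at hn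

/-- `y ↦ f (τ + y) - f (τ - y) - 2 y f' τ` vanishes at `0` and has derivative
`f' (τ + y) + f' (τ - y) - 2 f' τ ≥ 0`. -/
theorem two_mul_mul_le_sub {f f' : ℝ → ℝ} (hf' : MidpointConvexOn s f')
    (hf : ∀ x ∈ s, HasDerivAt f (f' x) x) {τ η : ℝ} (hη : 0 ≤ η)
    (hsub : Icc (τ - η) (τ + η) ⊆ s) :
    2 * η * f' τ ≤ f (τ + η) - f (τ - η) := by
  set φ : ℝ → ℝ := fun y => f (τ + y) - f (τ - y) - 2 * y * f' τ
  have hφ : ∀ y ∈ Icc 0 η, HasDerivAt φ (f' (τ + y) + f' (τ - y) - 2 * f' τ) y := by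
    intro y hy
    have h₁ := (hf (τ + y) (hsub ⟨by linarith [hy.1], by linarith [hy.2]⟩)).comp_const_add τ y
    have h₂ := (hf (τ - y) (hsub ⟨by linarith [hy.2], by linarith [hy.1]⟩)).comp_const_sub τ y
    have h₃ := ((hasDerivAt_id' y).const_mul 2).mul_const (f' τ)
    exact ((h₁.sub h₂).sub h₃).congr_deriv (by ring)
  have hmono : MonotoneOn φ (Icc 0 η) := by
    refine monotoneOn_of_hasDerivWithinAt_nonneg (f' := fun y => f' (τ + y) + f' (τ - y) - 2 * f' τ)
      (convex_Icc 0 η)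
      (fun y hy => (hφ y hy).continuousAt.continuousWithinAt) (fun y hy => ?_) (fun y hy => ?_)
    · rw [interior_Icc] at hy ⊢
      exact (hφ y (Ioo_subset_Icc_self hy)).hasDerivWithinAt
    · rw [interior_Icc] at hy
      have := hf' τ y (hsub ⟨by linarith [hy.2], by linarith [hy.1]⟩)
        (hsub ⟨by linarith [hy.1], by linarith [hy.2]⟩)
      linarith
  have := hmono ⟨le_rfl, hη⟩ ⟨hη, le_rfl⟩ hη
  simp only [φ, add_zero, sub_zero, mul_zero, zero_mul, sub_self] at this
  linarith

/-- Near `t`, `two_mul_mul_le_sub` and monotonicity of `f` bound `f'` by the difference quotient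
of `f` over `[t - 2δ, t + 2δ]`. -/
theorem continuousOn_of_hasDerivAt {f f' : ℝ → ℝ} (hf' : MidpointConvexOn s f') (hs : IsOpen s)
    (hf : ∀ x ∈ s, HasDerivAt f (f' x) x) (hnn : ∀ x ∈ s, 0 ≤ f' x) : ContinuousOn f' s := by
  intro t ht
  obtain ⟨δ, hδ, hsub⟩ : ∃ δ > 0, Icc (t - 2 * δ) (t + 2 * δ) ⊆ s := by
    obtain ⟨ε, hε, hball⟩ := Metric.nhds_basis_closedBall.mem_iff.mp (hs.mem_nhds ht)
    rw [Real.closedBall_eq_Icc] at hball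
    exact ⟨ε / 2, half_pos hε, by convert hball using 2 <;> ring⟩
  have hmono : MonotoneOn f (Icc (t - 2 * δ) (t + 2 * δ)) := by
    refine monotoneOn_of_hasDerivWithinAt_nonneg (convex_Icc _ _)
      (fun x hx => (hf x (hsub hx)).continuousAt.continuousWithinAt)
      (fun x hx => (hf x (hsub (interior_subset hx))).hasDerivWithinAt)
      (fun x hx => hnn x (hsub (interior_subset hx)))
  refine (hf'.continuousAt hδ (M := (f (t + 2 * δ) - f (t - 2 * δ)) / (2 * δ))
    ((Icc_subset_Icc (by linarith) (by linarith)).trans hsub) fun x hx => ?_).continuousWithinAt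
  have hI : Icc (x - δ) (x + δ) ⊆ Icc (t - 2 * δ) (t + 2 * δ) :=
    Icc_subset_Icc (by linarith [hx.1]) (by linarith [hx.2])
  have hq := hf'.two_mul_mul_le_sub hf hδ.le (hI.trans hsub)
  have h₁ : f (x + δ) ≤ f (t + 2 * δ) :=
    hmono (hI ⟨by linarith, le_rfl⟩) ⟨by linarith, le_rfl⟩ (by linarith [hx.2])
  have h₂ : f (t - 2 * δ) ≤ f (x - δ) :=
    hmono ⟨le_rfl, by linarith⟩ (hI ⟨le_rfl, by linarith⟩) (by linarith [hx.1])
  rw [le_div_iff₀ (by positivity)]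
  linarith

end MidpointConvexOn

section CauchySchwarz

variable {Ω : Type*} [MeasurableSpace Ω] {μ : Measure Ω}

/-- The quadratic `t ↦ ∫ (f t² - 2 g t + h)` is nonnegative, so its discriminant is not positive. -/
theorem sq_integral_le_integral_mul_integral_of_sq_le {f g h : Ω → ℝ} (hf : Integrable f μ)
    (hg : Integrable g μ) (hh : Integrable h μ) (hf₀ : 0 ≤ᵐ[μ] f) (hh₀ : 0 ≤ᵐ[μ] h)
    (hgfh : ∀ᵐ ω ∂μ, g ω ^ 2 ≤ f ω * h ω) :
    (∫ ω, g ω ∂μ) ^ 2 ≤ (∫ ω, f ω ∂μ) * ∫ ω, h ω ∂μ := by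
  have hquad : ∀ t : ℝ,
      0 ≤ (∫ ω, f ω ∂μ) * (t * t) + (-2 * ∫ ω, g ω ∂μ) * t + ∫ ω, h ω ∂μ := by
    intro t
    have hpt : ∀ᵐ ω ∂μ, 0 ≤ f ω * (t * t) + g ω * (-2 * t) + h ω := by
      filter_upwards [hf₀, hh₀, hgfh] with ω (hfω : 0 ≤ f ω) (hhω : 0 ≤ h ω) hω
      rcases hfω.eq_or_lt with h0 | hpos
      · rw [← h0, zero_mul] at hω
        rw [← h0, pow_eq_zero_iff two_ne_zero |>.mp (le_antisymm hω (sq_nonneg _))]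
        simpa using hhω
      · refine nonneg_of_mul_nonneg_right ?_ hpos
        nlinarith [sq_nonneg (f ω * t - g ω)]
    have hfg : Integrable (fun ω => f ω * (t * t) + g ω * (-2 * t)) μ :=
      (hf.mul_const _).add (hg.mul_const _)
    have := integral_nonneg_of_ae hpt
    rw [integral_add hfg hh, integral_add (hf.mul_const _) (hg.mul_const _), integral_mul_const,
      integral_mul_const] at this
    linarith
  have := discrim_le_zero hquad
  rw [discrim] at this
  nlinarith

end CauchySchwarz

noncomputable def derivIntegrand {Ω : Type*} (G' : ℝ → ℝ) (V : Ω → ℝ) (x : ℝ) (ω : Ω) : ℝ :=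
  if 0 < V ω then V ω * G' (x * V ω) else 0

section Mixture

variable {Ω : Type*} [MeasurableSpace Ω] {μ : Measure Ω} {a : ℝ} {G G' : ℝ → ℝ} {V : Ω → ℝ}

theorem ae_forall_lt_mul (ha : 0 ≤ a) (hV1 : 0 < a → ∀ᵐ ω ∂μ, 1 ≤ V ω) :
    ∀ᵐ ω ∂μ, ∀ x, a < x → 0 < V ω → a < x * V ω := by
  rcases ha.eq_or_lt with rfl | ha
  · exact ae_of_all _ fun ω x hx hV => mul_pos hx hV
  · filter_upwards [hV1 ha] with ω hω x hx _
    nlinarith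

theorem derivIntegrand_nonneg (hG' : ∀ x ∈ Ioi a, 0 ≤ G' x)
    (hVa : ∀ᵐ ω ∂μ, ∀ x, a < x → 0 < V ω → a < x * V ω) {x : ℝ} (hx : a < x) :
    0 ≤ᵐ[μ] derivIntegrand G' V x := by
  filter_upwards [hVa] with ω hω
  unfold derivIntegrand
  split_ifs with hV
  · exact mul_nonneg hV.le (hG' _ (hω x hx hV))
  · exact le_rfl

theorem sq_derivIntegrand_le (hG' : MidpointLogConvexOn (Ioi a) G')
    (hVa : ∀ᵐ ω ∂μ, ∀ x, a < x → 0 < V ω → a < x * V ω) {c y : ℝ} (h₁ : a < c - y)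
    (h₂ : a < c + y) :
    ∀ᵐ ω ∂μ, derivIntegrand G' V c ω ^ 2 ≤
      derivIntegrand G' V (c - y) ω * derivIntegrand G' V (c + y) ω := by
  filter_upwards [hVa] with ω hω
  unfold derivIntegrand
  split_ifs with hV
  · have hlc := hG' (c * V ω) (y * V ω) (by rw [← sub_mul]; exact hω _ h₁ hV)
      (by rw [← add_mul]; exact hω _ h₂ hV)
    rw [sub_mul, add_mul]
    calc (V ω * G' (c * V ω)) ^ 2 = V ω ^ 2 * G' (c * V ω) ^ 2 := by ring
      _ ≤ V ω ^ 2 * (G' (c * V ω - y * V ω) * G' (c * V ω + y * V ω)) := by gcongr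
      _ = _ := by ring
  · simp

theorem aestronglyMeasurable_derivIntegrand (hV : Measurable V)
    (hG : ∀ x ∈ Ioi a, HasDerivAt G (G' x) x)
    (hVa : ∀ᵐ ω ∂μ, ∀ x, a < x → 0 < V ω → a < x * V ω) {x : ℝ} (hx : a < x) :
    AEStronglyMeasurable (derivIntegrand G' V x) μ := by
  have hmeas : Measurable (derivIntegrand (deriv G) V x) :=
    Measurable.ite (measurableSet_lt measurable_const hV)
      (hV.mul ((measurable_deriv G).comp (hV.const_mul x))) measurable_const
  refine hmeas.aestronglyMeasurable.congr ?_
  filter_upwards [hVa] with ω hω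
  unfold derivIntegrand
  split_ifs with hV
  · rw [(hG _ (hω x hx hV)).deriv]
  · rfl

/-- On `{V > 0}`, the bound `2 ε V G'(xV) ≤ G(xV + εV) - G(xV - εV)` for midpoint convex
derivatives, followed by monotonicity of `G`. -/
theorem norm_derivIntegrand_le (hmono : Monotone G) (hG : ∀ x ∈ Ioi a, HasDerivAt G (G' x) x)
    (hG'nn : ∀ x ∈ Ioi a, 0 ≤ G' x) (hG' : MidpointConvexOn (Ioi a) G') (hVnn : ∀ ω, 0 ≤ V ω)
    (hVa : ∀ᵐ ω ∂μ, ∀ x, a < x → 0 < V ω → a < x * V ω) {x₀ ε : ℝ} (hε : 0 < ε)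
    (hx₀ : a < x₀ - 2 * ε) :
    ∀ᵐ ω ∂μ, ∀ x ∈ Metric.ball x₀ ε, ‖derivIntegrand G' V x ω‖ ≤
      (G ((x₀ + 2 * ε) * V ω) - G ((x₀ - 2 * ε) * V ω)) / (2 * ε) := by
  filter_upwards [hVa] with ω hω x hx
  rw [Metric.mem_ball, Real.dist_eq, abs_sub_lt_iff] at hx
  unfold derivIntegrand
  split_ifs with hV
  · have hsub : Icc (x * V ω - ε * V ω) (x * V ω + ε * V ω) ⊆ Ioi a := fun z hz =>
      lt_of_lt_of_le (by rw [← sub_mul]; exact hω _ (by linarith) hV) hz.1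
    have hq := hG'.two_mul_mul_le_sub hG (mul_pos hε hV).le hsub
    have h₁ : G (x * V ω + ε * V ω) ≤ G ((x₀ + 2 * ε) * V ω) :=
      hmono (by rw [← add_mul]; exact mul_le_mul_of_nonneg_right (by linarith) hV.le)
    have h₂ : G ((x₀ - 2 * ε) * V ω) ≤ G (x * V ω - ε * V ω) :=
      hmono (by rw [← sub_mul]; exact mul_le_mul_of_nonneg_right (by linarith) hV.le)
    rw [Real.norm_eq_abs, abs_of_nonneg (mul_nonneg hV.le (hG'nn _ (hω x (by linarith) hV))),
      le_div_iff₀ (by positivity)]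
    nlinarith
  · rw [norm_zero]
    exact div_nonneg (sub_nonneg.mpr (hmono (by gcongr; exacts [hVnn ω, by linarith])))
      (by positivity)

theorem hasDerivAt_integral_comp_mul (hV : Measurable V) (hVnn : ∀ ω, 0 ≤ V ω)
    (hmono : Monotone G) (hG : ∀ x ∈ Ioi a, HasDerivAt G (G' x) x)
    (hG'nn : ∀ x ∈ Ioi a, 0 ≤ G' x) (hG' : MidpointConvexOn (Ioi a) G')
    (hVa : ∀ᵐ ω ∂μ, ∀ x, a < x → 0 < V ω → a < x * V ω)
    (hint : ∀ x, a ≤ x → Integrable (fun ω => G (x * V ω)) μ) {x₀ : ℝ} (hx₀ : a < x₀) :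
    Integrable (derivIntegrand G' V x₀) μ ∧
      HasDerivAt (fun x => ∫ ω, G (x * V ω) ∂μ) (∫ ω, derivIntegrand G' V x₀ ω ∂μ) x₀ := by
  obtain ⟨ε, hε, hx₀ε⟩ : ∃ ε > 0, a < x₀ - 2 * ε := ⟨(x₀ - a) / 4, by positivity, by linarith⟩
  refine hasDerivAt_integral_of_dominated_loc_of_deriv_le (F := fun x ω => G (x * V ω))
    (Metric.ball_mem_nhds x₀ hε)
    (Eventually.of_forall fun x => (hmono.measurable.comp (hV.const_mul x)).aestronglyMeasurable)
    (hint x₀ hx₀.le) (aestronglyMeasurable_derivIntegrand hV hG hVa hx₀)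
    (norm_derivIntegrand_le hmono hG hG'nn hG' hVnn hVa hε (by linarith))
    (((hint _ (by linarith)).sub (hint _ (by linarith))).div_const _) ?_
  filter_upwards [hVa] with ω hω x hx
  rw [Metric.mem_ball, Real.dist_eq, abs_sub_lt_iff] at hx
  unfold derivIntegrand
  split_ifs with hV
  · have := (hG _ (hω x (by linarith) hV)).comp x (hasDerivAt_mul_const (V ω))
    rwa [mul_comm, Function.comp_def] at this
  · simp only [le_antisymm (not_lt.mp hV) (hVnn ω), mul_zero]
    exact hasDerivAt_const x _

theorem midpointLogConvexOn_integral_derivIntegrand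
    (hG'nn : ∀ x ∈ Ioi a, 0 ≤ G' x) (hG' : MidpointLogConvexOn (Ioi a) G')
    (hVa : ∀ᵐ ω ∂μ, ∀ x, a < x → 0 < V ω → a < x * V ω)
    (hint : ∀ x ∈ Ioi a, Integrable (derivIntegrand G' V x) μ) :
    MidpointLogConvexOn (Ioi a) fun x => ∫ ω, derivIntegrand G' V x ω ∂μ := by
  intro c y (h₁ : a < c - y) (h₂ : a < c + y)
  exact sq_integral_le_integral_mul_integral_of_sq_le (hint _ h₁)
    (hint c (show a < c by linarith)) (hint _ h₂) (derivIntegrand_nonneg hG'nn hVa h₁)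
    (derivIntegrand_nonneg hG'nn hVa h₂) (sq_derivIntegrand_le hG' hVa h₁ h₂)

end Mixture

theorem mixture_deriv_logConvex_general {Ω : Type*} [MeasurableSpace Ω]
    (ℙ : Measure Ω)
    (a : ℝ) (ha : 0 ≤ a) (G G' : ℝ → ℝ)
    (hmono : Monotone G)
    (hderiv : ∀ x, a < x → HasDerivAt G (G' x) x)
    (hlc : ∀ x, a < x → ∀ y ∈ Ioo (0 : ℝ) 1,
      (G' (x + y)) ^ 2 ≤ G' x * G' (x + 2 * y))
    (V : Ω → ℝ) (hV : Measurable V) (hVnn : ∀ ω, 0 ≤ V ω)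
    (hV1 : 0 < a → ∀ᵐ ω ∂ℙ, 1 ≤ V ω)
    (hint : ∀ x, a ≤ x → Integrable (fun ω => G (x * V ω)) ℙ)
    (H : ℝ → ℝ)
    (hH : ∀ x, a ≤ x → H x = ∫ ω, G (x * V ω) ∂ℙ) :
    (∀ x, a < x →
      HasDerivAt H (∫ ω, (if 0 < V ω then V ω * G' (x * V ω) else 0) ∂ℙ) x) ∧
    ContinuousOn
      (fun x : ℝ => ∫ ω, (if 0 < V ω then V ω * G' (x * V ω) else 0) ∂ℙ) (Ioi a) ∧
    ∀ x, a < x → ∀ y ∈ Ioo (0 : ℝ) 1,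
      (∫ ω, (if 0 < V ω then V ω * G' ((x + y) * V ω) else 0) ∂ℙ) ^ 2 ≤
        (∫ ω, (if 0 < V ω then V ω * G' (x * V ω) else 0) ∂ℙ) *
          ∫ ω, (if 0 < V ω then V ω * G' ((x + 2 * y) * V ω) else 0) ∂ℙ := by
  have hG'nn : ∀ x ∈ Ioi a, 0 ≤ G' x := fun x hx => (hderiv x hx).deriv ▸ hmono.deriv_nonneg
  have hG' : MidpointLogConvexOn (Ioi a) G' :=
    .of_mem_Ioo_zero_one hG'nn fun c y (h₁ : a < c - y) _ hy => by
      have := hlc (c - y) h₁ y hy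
      rwa [sub_add_cancel, show c - y + 2 * y = c + y by ring] at this
  have hVa := ae_forall_lt_mul (μ := ℙ) ha hV1
  have hdiff : ∀ x ∈ Ioi a, _ := fun x (hx : a < x) => hasDerivAt_integral_comp_mul hV hVnn hmono
    hderiv hG'nn (hG'.midpointConvexOn hG'nn) hVa hint hx
  have hH' : ∀ x ∈ Ioi a, HasDerivAt H (∫ ω, derivIntegrand G' V x ω ∂ℙ) x := fun x hx =>
    (hdiff x hx).2.congr_of_eventuallyEq <| by
      filter_upwards [Ioi_mem_nhds hx] with z hz using hH z (le_of_lt hz)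
  have hH'nn : ∀ x ∈ Ioi a, 0 ≤ ∫ ω, derivIntegrand G' V x ω ∂ℙ := fun x hx =>
    integral_nonneg_of_ae (derivIntegrand_nonneg hG'nn hVa hx)
  have hH'log :=
    midpointLogConvexOn_integral_derivIntegrand hG'nn hG' hVa fun x hx => (hdiff x hx).1
  refine ⟨hH', (hH'log.midpointConvexOn hH'nn).continuousOn_of_hasDerivAt isOpen_Ioi hH' hH'nn,
    fun x hx y hy => ?_⟩
  have := hH'log (x + y) y (by simpa using hx) (show a < x + y + y by linarith [hy.1])
  rwa [add_sub_cancel_right, add_assoc, ← two_mul] at this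

/-- Remark 2.2(iii): let `a ≥ 0`, `G` as in Lemma 2.2 and `V ≥ 0` a random
variable (with `V ≥ 1` a.s. when `a > 0`) such that `E(G(xV)) < ∞` for `x ≥ a`.  Then
`H x = E(G(xV))` (for `x ≥ a`, `H = 0` on `(-∞,a)`) is differentiable on `(a,∞)` with
derivative `x ↦ E(V · G'(xV) · 1_{V>0})`, which is continuous and log-convex on `(a,∞)`. -/
theorem mixture_deriv_logConvex {Ω : Type*} [MeasurableSpace Ω]
    (ℙ : Measure Ω) [IsProbabilityMeasure ℙ]
    (a : ℝ) (ha : 0 ≤ a) (G G' : ℝ → ℝ)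
    (hmono : Monotone G)
    (hrc : ∀ x : ℝ, ContinuousWithinAt G (Ici x) x)
    (hG0 : ∀ x, x < a → G x = 0)
    (hderiv : ∀ x, a < x → HasDerivAt G (G' x) x)
    (hlc : ∀ x, a < x → ∀ y ∈ Ioo (0 : ℝ) 1,
      (G' (x + y)) ^ 2 ≤ G' x * G' (x + 2 * y))
    (V : Ω → ℝ) (hV : Measurable V) (hVnn : ∀ ω, 0 ≤ V ω)
    (hV1 : 0 < a → ∀ᵐ ω ∂ℙ, 1 ≤ V ω)
    (hint : ∀ x, a ≤ x → Integrable (fun ω => G (x * V ω)) ℙ)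
    (H : ℝ → ℝ)
    (hH : ∀ x, a ≤ x → H x = ∫ ω, G (x * V ω) ∂ℙ)
    (hH0 : ∀ x, x < a → H x = 0) :
    (∀ x, a < x →
      HasDerivAt H (∫ ω, (if 0 < V ω then V ω * G' (x * V ω) else 0) ∂ℙ) x) ∧
    ContinuousOn
      (fun x : ℝ => ∫ ω, (if 0 < V ω then V ω * G' (x * V ω) else 0) ∂ℙ) (Ioi a) ∧
    ∀ x, a < x → ∀ y ∈ Ioo (0 : ℝ) 1,
      (∫ ω, (if 0 < V ω then V ω * G' ((x + y) * V ω) else 0) ∂ℙ) ^ 2 ≤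
        (∫ ω, (if 0 < V ω then V ω * G' (x * V ω) else 0) ∂ℙ) *
          ∫ ω, (if 0 < V ω then V ω * G' ((x + 2 * y) * V ω) else 0) ∂ℙ :=
  mixture_deriv_logConvex_general ℙ a ha G G' hmono hderiv hlc V hV hVnn hV1 hint H hH
end

section
/- Let p ∈ (0,1) and θ ∈ (0,1). Let X be a geometric random variable with P(X = k) = (1−p)·p^k for k = 0, 1, 2, …, and let W be a random variable independent of X with P(W = 2) = θ and P(W = 3) = 1−θ. Then the distribution of W·X is not infinitely divisible. -/
/-!
An s-finite measure has only countably many atoms, so the atoms of `ν ∗ ν` are exactly the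
sums of two atoms of `ν`. The law of `W·X` has its atoms exactly at the numbers `2k` and `3k`,
`k ∈ ℕ`. If it were `ν ∗ ν`, then, all its atoms being nonnegative and `0` being one of them,
`0` would be an atom of `ν`, so every atom of `ν` would be an atom of the law. The only ones
below `4` are `0, 2, 3`, so `2` and `3` would be atoms of `ν` and `5 = 2 + 3` an atom of the
law, which it is not.
-/

open MeasureTheory Set

/-- The `n`-fold additive self-convolution of a measure on `ℝ`
(`convPow ν 0 = δ₀`, the convolution identity). -/
noncomputable def convPow (ν : Measure ℝ) : ℕ → Measure ℝ
  | 0 => Measure.dirac 0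
  | n + 1 => Measure.conv (convPow ν n) ν

/-- A probability measure `μ` on `ℝ` is infinitely divisible if for every `n ≥ 1` there is a
probability measure `ν` with `μ = ν ∗ ⋯ ∗ ν` (`n` factors). -/
def IsInfinitelyDivisible (μ : Measure ℝ) : Prop :=
  ∀ n : ℕ, 0 < n → ∃ ν : Measure ℝ, IsProbabilityMeasure ν ∧ μ = convPow ν n

open scoped Pointwise

namespace MeasureTheory.Measure

section Atoms

variable {α : Type*} [MeasurableSpace α]

def atomSet (μ : Measure α) : Set α := {x | μ {x} ≠ 0}

lemma atomSet_mono {μ ν : Measure α} (h : μ ≤ ν) : atomSet μ ⊆ atomSet ν :=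
  fun _ hx => ne_bot_of_le_ne_bot hx (h _)

lemma mem_atomSet_smul_dirac {c : ENNReal} (hc : c ≠ 0) (a : α) :
    a ∈ atomSet (c • dirac a) := by
  simpa [atomSet, dirac_apply_of_mem (mem_singleton a)] using hc

lemma countable_atomSet [MeasurableSingletonClass α] (μ : Measure α) [SFinite μ] :
    (atomSet μ).Countable := by
  simpa only [atomSet, pos_iff_ne_zero] using
    countable_meas_pos_of_disjoint_iUnion (μ := μ) measurableSet_singleton
      fun _ _ hxy => disjoint_singleton.2 hxy

lemma measure_eq_zero_of_countable_of_disjoint_atomSet {μ : Measure α} {s : Set α}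
    (hs : s.Countable) (h : Disjoint s (atomSet μ)) : μ s = 0 := by
  rw [← biUnion_of_singleton s, measure_biUnion_null_iff hs]
  exact fun x hx => not_not.1 (disjoint_left.1 h hx)

lemma atomSet_map_subset_of_ae_mem {Ω : Type*} [MeasurableSpace Ω] [MeasurableSingletonClass α]
    {P : Measure Ω} {f : Ω → α} (hf : Measurable f) {s : Set α}
    (h : ∀ᵐ ω ∂P, f ω ∈ s) :
    atomSet (P.map f) ⊆ s := by
  intro x hx
  by_contra hxs
  rw [atomSet, mem_ofPred_eq, map_apply hf (measurableSet_singleton x)] at hx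
  exact hx (measure_mono_null (fun ω (hω : f ω = x) => (hω ▸ hxs : f ω ∉ s)) (ae_iff.1 h))

end Atoms

section Convolution

@[to_additive]
lemma atomSet_mul_subset_atomSet_mconv {M : Type*} [Monoid M] [MeasurableSpace M]
    [MeasurableMul₂ M] (μ ν : Measure M) [SFinite ν] :
    atomSet μ * atomSet ν ⊆ atomSet (μ ∗ₘ ν) := by
  rintro _ ⟨x, hx, y, hy, rfl⟩
  refine ne_bot_of_le_ne_bot (mul_ne_zero hx hy) ?_
  rw [← prod_prod, mconv]
  exact le_map_apply (by fun_prop) _ |>.trans' (measure_mono (by simp))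

variable {G : Type*} [AddGroup G] [MeasurableSpace G] [MeasurableAdd₂ G]
  [MeasurableSingletonClass G]

lemma conv_apply_singleton (μ ν : Measure G) [SFinite ν] (s : G) :
    (μ ∗ ν) {s} = ∫⁻ x, ν {-x + s} ∂μ := by
  rw [conv, map_apply measurable_add (measurableSet_singleton s),
    prod_apply (measurable_add (measurableSet_singleton s))]
  congr! with x
  ext y
  simp [eq_neg_add_iff_add_eq]

lemma atomSet_conv (μ ν : Measure G) [SFinite ν] :
    atomSet (μ ∗ ν) = atomSet μ + atomSet ν := by
  refine Subset.antisymm (fun s hs => ?_) (atomSet_add_subset_atomSet_conv μ ν)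
  by_contra hsum
  -- `x ↦ ν {-x + s}` vanishes off a countable set containing no atom of `μ`.
  have hT : μ {x | -x + s ∈ atomSet ν} = 0 := by
    refine measure_eq_zero_of_countable_of_disjoint_atomSet
      ((countable_atomSet ν).preimage ((add_left_injective s).comp neg_injective)) ?_
    exact disjoint_left.2 fun x hxT hxμ => hsum ⟨x, hxμ, -x + s, hxT, by simp⟩
  refine hs ?_
  rw [conv_apply_singleton, lintegral_congr_ae (ae_iff.2 hT : ∀ᵐ x ∂μ, ν {-x + s} = 0)]
  simp

end Convolution

end MeasureTheory.Measure

open Measure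

lemma convPow_two (ν : Measure ℝ) [SFinite ν] : convPow ν 2 = ν ∗ ν := by
  rw [convPow, convPow, convPow, dirac_zero_conv]

def twoThreeMultiples : Set ℝ := ({2, 3} : Set ℝ) * range ((↑) : ℕ → ℝ)

lemma mem_twoThreeMultiples {x : ℝ} :
    x ∈ twoThreeMultiples ↔ ∃ k : ℕ, x = 2 * k ∨ x = 3 * k := by
  simp [twoThreeMultiples, mem_mul, eq_comm, exists_or]

lemma nonneg_of_mem_twoThreeMultiples {x : ℝ} (hx : x ∈ twoThreeMultiples) : 0 ≤ x := by
  obtain ⟨k, rfl | rfl⟩ := mem_twoThreeMultiples.1 hx <;> positivity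

lemma eq_of_mem_twoThreeMultiples_of_lt_four {x : ℝ} (hx : x ∈ twoThreeMultiples) (h4 : x < 4) :
    x = 0 ∨ x = 2 ∨ x = 3 := by
  obtain ⟨k, rfl | rfl⟩ := mem_twoThreeMultiples.1 hx <;>
  · have hk : k < 2 := by exact_mod_cast (by linarith : (k : ℝ) < 2)
    interval_cases k <;> norm_num

lemma five_notMem_twoThreeMultiples : (5 : ℝ) ∉ twoThreeMultiples := by
  rw [mem_twoThreeMultiples]
  rintro ⟨k, h5 | h5⟩ <;> norm_cast at h5 <;> omega

lemma not_zero_two_three_subset_add_self {A : Set ℝ} (hA : A + A ⊆ twoThreeMultiples) :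
    ¬ ({0, 2, 3} : Set ℝ) ⊆ A + A := by
  intro h
  simp only [insert_subset_iff, singleton_subset_iff] at h
  obtain ⟨⟨e, he, f, hf, hef⟩, h2, h3⟩ := h
  have nonneg : ∀ a ∈ A, 0 ≤ a := fun a ha => by
    linarith [nonneg_of_mem_twoThreeMultiples (hA (add_mem_add ha ha))]
  have zero_mem : 0 ∈ A := by
    obtain rfl : e = 0 := by linarith [nonneg e he, nonneg f hf]
    exact he
  have small : ∀ a ∈ A, a < 4 → a = 0 ∨ a = 2 ∨ a = 3 := fun a ha =>
    eq_of_mem_twoThreeMultiples_of_lt_four (hA (by simpa using add_mem_add ha zero_mem))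
  have mem_of_le_three : ∀ x ∈ A + A, x ≤ 3 → x ∈ A := by
    rintro _ ⟨a, ha, b, hb, rfl⟩ hab
    have ha0 := nonneg a ha
    have hb0 := nonneg b hb
    rcases small a ha (by linarith) with rfl | rfl | rfl <;>
    rcases small b hb (by linarith) with rfl | rfl | rfl <;>
    first | simpa | norm_num at hab
  have five_mem : (2 : ℝ) + 3 ∈ A + A :=
    add_mem_add (mem_of_le_three 2 h2 (by norm_num)) (mem_of_le_three 3 h3 (by norm_num))
  norm_num at five_mem
  exact five_notMem_twoThreeMultiples (hA five_mem)

lemma not_isInfinitelyDivisible_of_atomSet_eq {μ : Measure ℝ}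
    (hμ : atomSet μ = twoThreeMultiples) : ¬ IsInfinitelyDivisible μ := by
  intro hμdiv
  obtain ⟨ν, _, rfl⟩ := hμdiv 2 two_pos
  rw [convPow_two, atomSet_conv] at hμ
  refine not_zero_two_three_subset_add_self hμ.subset (hμ ▸ ?_)
  simp only [insert_subset_iff, singleton_subset_iff, mem_twoThreeMultiples]
  exact ⟨⟨0, by norm_num⟩, ⟨1, by norm_num⟩, ⟨1, by norm_num⟩⟩

/-- Example 3.2: if `X` is geometric with parameter `p ∈ (0,1)` and `W`,
independent of `X`, takes the values `2` and `3` with probabilities `θ` and `1-θ`,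
`θ ∈ (0,1)`, then the distribution of `W·X` is not infinitely divisible. -/
theorem prod_geometric_two_three_not_infDiv {Ω : Type*} [MeasurableSpace Ω]
    (ℙ : Measure Ω) [IsProbabilityMeasure ℙ]
    (p θ : ℝ) (hp : p ∈ Ioo (0 : ℝ) 1) (hθ : θ ∈ Ioo (0 : ℝ) 1)
    (X W : Ω → ℝ) (hX : Measurable X) (hW : Measurable W)
    (hXlaw : Measure.map X ℙ =
      Measure.sum fun k : ℕ => ENNReal.ofReal ((1 - p) * p ^ k) • Measure.dirac (k : ℝ))
    (hWlaw : Measure.map W ℙ =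
      ENNReal.ofReal θ • Measure.dirac (2 : ℝ) + ENNReal.ofReal (1 - θ) • Measure.dirac (3 : ℝ))
    (hindep : ProbabilityTheory.IndepFun W X ℙ) :
    ¬ IsInfinitelyDivisible (Measure.map (fun ω => W ω * X ω) ℙ) := by
  have hW_ae : ∀ᵐ ω ∂ℙ, W ω ∈ ({2, 3} : Set ℝ) := by
    refine ae_of_ae_map hW.aemeasurable ?_
    rw [hWlaw, ae_add_measure_iff]
    exact ⟨ae_smul_measure (by simp [ae_dirac_eq]) _, ae_smul_measure (by simp [ae_dirac_eq]) _⟩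
  have hX_ae : ∀ᵐ ω ∂ℙ, X ω ∈ range ((↑) : ℕ → ℝ) := by
    refine ae_of_ae_map hX.aemeasurable ?_
    rw [hXlaw, ae_sum_iff]
    exact fun k => ae_smul_measure (by simp [ae_dirac_eq]) _
  have hW_atoms : ({2, 3} : Set ℝ) ⊆ atomSet (ℙ.map W) := by
    rw [hWlaw, insert_subset_iff, singleton_subset_iff]
    constructor
    · exact atomSet_mono (Measure.le_add_right le_rfl)
        (mem_atomSet_smul_dirac (ENNReal.ofReal_pos.2 hθ.1).ne' _)
    · exact atomSet_mono (Measure.le_add_left le_rfl)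
        (mem_atomSet_smul_dirac (ENNReal.ofReal_pos.2 (sub_pos.2 hθ.2)).ne' _)
  have hX_atoms : range ((↑) : ℕ → ℝ) ⊆ atomSet (ℙ.map X) := by
    rintro _ ⟨k, rfl⟩
    rw [hXlaw]
    exact atomSet_mono (le_sum _ k) (mem_atomSet_smul_dirac
      (ENNReal.ofReal_pos.2 (mul_pos (sub_pos.2 hp.2) (pow_pos hp.1 k))).ne' _)
  have hlaw : ℙ.map (fun ω => W ω * X ω) = ℙ.map W ∗ₘ ℙ.map X :=
    hindep.map_mul_eq_map_mconv_map hW hX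
  refine not_isInfinitelyDivisible_of_atomSet_eq (Subset.antisymm ?_ ?_)
  · exact atomSet_map_subset_of_ae_mem (hW.mul hX) <| by
      filter_upwards [hW_ae, hX_ae] with ω hw hx using mul_mem_mul hw hx
  · exact hlaw ▸ (mul_subset_mul hW_atoms hX_atoms).trans (atomSet_mul_subset_atomSet_mconv _ _)
end
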